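/- Let X be a smooth manifold around x̄ ∈ X and S : ℝⁿ ⇉ ℝᵐ with gph S locally closed at (x̄,ū), X ⊆ dom S. Then the set-valued mapping (x,u) ↦ proj_{T_X(x)×ℝᵐ} N_{gph S|_X}(x,u) is outer semicontinuous relative to gph S|_X at (x̄,ū), and consequently the projectional coderivative satisfies D*_X S(x̄|ū) = proj_{T_X(x̄)} D*S|_X(x̄|ū) (i.e. the outer limit in the definition is attained at the reference point). -/

import Mathlib

open Filter Topology Set Metric
open scoped ENNReal NNReal

noncomputable section

/-- Euclidean space ℝⁿ. -/
abbrev Euc (n : ℕ) := EuclideanSpace ℝ (Fin n)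

variable {E F : Type*}

/-- Set-valued metric (nearest-point) projection onto `C`. -/
def projSet [NormedAddCommGroup E] (C : Set E) (v : E) : Set E :=
  {y | y ∈ C ∧ ‖v - y‖ = Metric.infDist v C}

/-- Bouligand (contingent) tangent cone to `C` at `x`. -/
def tanCone [NormedAddCommGroup E] [NormedSpace ℝ E] (C : Set E) (x : E) : Set E :=
  {w | ∃ t : ℕ → ℝ, ∃ w' : ℕ → E, (∀ k, 0 < t k) ∧ Tendsto t atTop (𝓝 0) ∧
      Tendsto w' atTop (𝓝 w) ∧ ∀ k, x + t k • w' k ∈ C}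

section Normals
variable [NormedAddCommGroup E] [InnerProductSpace ℝ E]
  [NormedAddCommGroup F] [InnerProductSpace ℝ F]

/-- Fréchet (regular) normal cone to `C` at `x`. -/
def fNormal (C : Set E) (x : E) : Set E :=
  {v | x ∈ C ∧ ∀ ε > 0, ∃ δ > 0, ∀ y ∈ C, ‖y - x‖ < δ → (inner ℝ v (y - x) : ℝ) ≤ ε * ‖y - x‖}

/-- Limiting (Mordukhovich) normal cone to `C` at `x`. -/
def lNormal (C : Set E) (x : E) : Set E :=
  {v | x ∈ C ∧ ∃ xk vk : ℕ → E, (∀ k, vk k ∈ fNormal C (xk k)) ∧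
      Tendsto xk atTop (𝓝 x) ∧ Tendsto vk atTop (𝓝 v)}

/-- Fréchet normal cone to a subset of a product space (componentwise inner product). -/
def fNormal2 (D : Set (E × F)) (z : E × F) : Set (E × F) :=
  {v | z ∈ D ∧ ∀ ε > 0, ∃ δ > 0, ∀ z' ∈ D, ‖z' - z‖ < δ →
      (inner ℝ v.1 (z'.1 - z.1) : ℝ) + (inner ℝ v.2 (z'.2 - z.2) : ℝ) ≤ ε * ‖z' - z‖}

/-- Limiting normal cone to a subset of a product space. -/
def lNormal2 (D : Set (E × F)) (z : E × F) : Set (E × F) :=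
  {v | z ∈ D ∧ ∃ zk vk : ℕ → E × F, (∀ k, vk k ∈ fNormal2 D (zk k)) ∧
      Tendsto zk atTop (𝓝 z) ∧ Tendsto vk atTop (𝓝 v)}

/-- Graph of a set-valued mapping. -/
def gph (S : E → Set F) : Set (E × F) := {z | z.2 ∈ S z.1}

/-- Restriction of a set-valued mapping to a set `X`. -/
def restr (S : E → Set F) (X : Set E) : E → Set F := fun x => {u | u ∈ S x ∧ x ∈ X}

/-- Fréchet coderivative of `S` at `x` for `u`. -/
def fCoderiv (S : E → Set F) (x : E) (u : F) (u' : F) : Set E :=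
  {x' | (x', -u') ∈ fNormal2 (gph S) (x, u)}

/-- Limiting coderivative of `S` at `x` for `u`. -/
def coderiv (S : E → Set F) (x : E) (u : F) (u' : F) : Set E :=
  {x' | (x', -u') ∈ lNormal2 (gph S) (x, u)}

/-- Projection of the limiting normal cone of `gph (restr S X)` at `z`
onto `T_X(z.1) × F` (projection acting on the first component only). -/
def projNormal (S : E → Set F) (X : Set E) (z : E × F) : Set (E × F) :=
  {q | ∃ v : E, (v, q.2) ∈ lNormal2 (gph (restr S X)) z ∧ q.1 ∈ projSet (tanCone X z.1) v}

/-- Projectional coderivative of `S` relative to `X` at `x` for `u`: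
the outer limit of the projected normal cones along `gph (restr S X)`. -/
def projCoderiv (S : E → Set F) (X : Set E) (x : E) (u : F) (u' : F) : Set E :=
  {t | ∃ zk qk : ℕ → E × F,
      (∀ k, zk k ∈ gph (restr S X)) ∧ (∀ k, qk k ∈ projNormal S X (zk k)) ∧
      Tendsto zk atTop (𝓝 (x, u)) ∧ Tendsto qk atTop (𝓝 (t, -u'))}

/-- `C` is locally closed at `z`. -/
def LocallyClosedAt (C : Set E) (z : E) : Prop :=
  ∃ ε > 0, IsClosed (C ∩ Metric.closedBall z ε)

/-- `S` has the Lipschitz-like (Aubin) property relative to `X` at `xb` for `ub`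
with constant `κ`. -/
def LipschitzLikeRel (S : E → Set F) (X : Set E) (xb : E) (ub : F) (κ : ℝ) : Prop :=
  LocallyClosedAt (gph S) (xb, ub) ∧
  ∃ V ∈ 𝓝 xb, ∃ W ∈ 𝓝 ub, ∀ x ∈ X ∩ V, ∀ x' ∈ X ∩ V, ∀ u ∈ S x' ∩ W,
    ∃ u'' ∈ S x, ‖u - u''‖ ≤ κ * ‖x' - x‖

end Normals

/-- `X ⊆ ℝⁿ` is a smooth manifold around `x₀`, witnessed by the chart data
`(O, Φ, Φ')`: `O` open containing `x₀`, `X ∩ O = Φ⁻¹(0)`, `Φ` is `C¹` on `O`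
with derivative `Φ'`, and `Φ'(x₀)` is surjective (full rank). -/
def IsSmoothMfdChart {n c : ℕ} (X : Set (Euc n)) (x₀ : Euc n) (O : Set (Euc n))
    (Φ : Euc n → Euc c) (Φ' : Euc n → (Euc n →L[ℝ] Euc c)) : Prop :=
  IsOpen O ∧ x₀ ∈ O ∧ X ∩ O = {x | x ∈ O ∧ Φ x = 0} ∧
  (∀ x ∈ O, HasFDerivAt Φ (Φ' x) x) ∧ ContinuousOn Φ' O ∧
  Function.Surjective (Φ' x₀)

/-- `X ⊆ ℝⁿ` is a smooth manifold around `x₀`. -/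
def SmoothManifoldAround {n : ℕ} (X : Set (Euc n)) (x₀ : Euc n) : Prop :=
  ∃ (c : ℕ) (O : Set (Euc n)) (Φ : Euc n → Euc c) (Φ' : Euc n → (Euc n →L[ℝ] Euc c)),
    IsSmoothMfdChart X x₀ O Φ Φ'

/-! Near `xb` the manifold is the regular zero set `X ∩ O = Φ⁻¹(0)`, so `T_X(x) = ker Φ'(x)` and
projecting `v` onto it subtracts a vector `Φ'(x)†μ` of `(ker Φ'(x))ᗮ = range Φ'(x)†`. Such a vector
is a Fréchet normal to `X`, so `(Φ'(x)†μ, 0)` is a Fréchet normal to `gph S|_X`; as it depends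
continuously on `x`, subtracting it preserves limiting normality. Hence near `(xb, ub)` the projected
normal cone is `N_{gph S|_X}(x, u) ∩ (ker Φ'(x) × ℝᵐ)`, whose graph is closed because the limiting
normal cone has closed graph and `Φ'` is continuous. -/

section TangentCone
variable {G : Type*} [NormedAddCommGroup E] [NormedSpace ℝ E]
  [NormedAddCommGroup G] [NormedSpace ℝ G] {C : Set E} {Φ : E → G} {A : E →L[ℝ] G} {x w : E}

lemma mem_tanCone_of_tendsto {t : ℕ → ℝ} {w' : ℕ → E} (ht : ∀ᶠ k in atTop, 0 < t k)
    (ht0 : Tendsto t atTop (𝓝 0)) (hw' : Tendsto w' atTop (𝓝 w))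
    (hmem : ∀ᶠ k in atTop, x + t k • w' k ∈ C) : w ∈ tanCone C x := by
  obtain ⟨N, hN⟩ := eventually_atTop.1 (ht.and hmem)
  exact ⟨fun k => t (k + N), fun k => w' (k + N), fun k => (hN _ (by omega)).1,
    ht0.comp (tendsto_add_atTop_nat N), hw'.comp (tendsto_add_atTop_nat N),
    fun k => (hN _ (by omega)).2⟩

lemma tanCone_subset_ker (hΦ : HasFDerivAt Φ A x) (hC : ∀ᶠ y in 𝓝 x, y ∈ C → Φ y = Φ x) :
    tanCone C x ⊆ (A.ker : Set E) := by
  rintro w ⟨t, w', ht, ht0, hw', hmem⟩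
  have hd : Tendsto (fun k => t k • w' k) atTop (𝓝 0) := by simpa using ht0.smul hw'
  have hlim := (hΦ.hasFDerivWithinAt (s := univ)).lim hd (by simp) (c := fun k => (t k)⁻¹)
    (by simpa [smul_smul, inv_mul_cancel₀ (ht _).ne'] using hw')
  have hzero : ∀ᶠ k in atTop, (t k)⁻¹ • (Φ (x + t k • w' k) - Φ x) = 0 := by
    have hy : Tendsto (fun k => x + t k • w' k) atTop (𝓝 x) := by
      simpa using tendsto_const_nhds.add hd
    filter_upwards [hy.eventually hC] with k hk
    rw [hk (hmem k), sub_self, smul_zero]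
  exact tendsto_nhds_unique (hlim.congr' hzero) tendsto_const_nhds

lemma ker_subset_tanCone [CompleteSpace E] [FiniteDimensional ℝ G] (hΦ : HasStrictFDerivAt Φ A x)
    (hA : A.range = ⊤) (hC : ∀ᶠ y in 𝓝 x, Φ y = Φ x → y ∈ C) :
    (A.ker : Set E) ⊆ tanCone C x := by
  intro w hw
  -- `γ` parametrizes the level set `Φ⁻¹(Φ x)` near `x` by `ker A`, with derivative the inclusion
  set γ : A.ker → E := hΦ.implicitFunction Φ A hA (Φ x)
  set c : ℕ → ℝ := fun k => k + 1
  have hc : Tendsto c atTop atTop := tendsto_atTop_add_const_right _ 1 tendsto_natCast_atTop_atTop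
  have harg : Tendsto (fun k => (c k)⁻¹ • (⟨w, hw⟩ : A.ker)) atTop (𝓝 0) := by
    simpa using (tendsto_inv_atTop_zero.comp hc).smul_const (⟨w, hw⟩ : A.ker)
  have hγC : ∀ᶠ k in atTop, γ ((c k)⁻¹ • ⟨w, hw⟩) ∈ C := by
    have hγx := hΦ.tendsto_implicitFunction hA tendsto_const_nhds harg
    have hγΦ := (tendsto_const_nhds.prodMk_nhds harg).eventually (hΦ.map_implicitFunction_eq hA)
    filter_upwards [hγx.eventually hC, hγΦ] with k hkC hkΦ
    exact hkC hkΦ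
  have hlim := (hΦ.to_implicitFunction hA).hasFDerivAt.lim ⟨w, hw⟩
    (tendsto_norm_atTop_atTop.comp hc)
  simp only [zero_add, hΦ.implicitFunction_apply_image] at hlim
  refine mem_tanCone_of_tendsto (t := fun k => (c k)⁻¹) (.of_forall fun k => by positivity)
    (tendsto_inv_atTop_zero.comp hc) hlim (hγC.mono fun k hk => ?_)
  rwa [smul_smul, inv_mul_cancel₀ (by positivity), one_smul, add_sub_cancel]

lemma tanCone_eq_ker [CompleteSpace E] [FiniteDimensional ℝ G] (hΦ : HasStrictFDerivAt Φ A x)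
    (hA : A.range = ⊤) (hC : ∀ᶠ y in 𝓝 x, y ∈ C ↔ Φ y = Φ x) :
    tanCone C x = (A.ker : Set E) :=
  (tanCone_subset_ker hΦ.hasFDerivAt (hC.mono fun _ h => h.1)).antisymm
    (ker_subset_tanCone hΦ hA (hC.mono fun _ h => h.2))

end TangentCone

section NormalCone
variable [NormedAddCommGroup E] [InnerProductSpace ℝ E] [NormedAddCommGroup F] [InnerProductSpace ℝ F]

lemma adjoint_apply_mem_fNormal {G : Type*} [NormedAddCommGroup G] [InnerProductSpace ℝ G]
    [CompleteSpace E] [CompleteSpace G] {C : Set E} {Φ : E → G} {A : E →L[ℝ] G} {x : E}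
    (hx : x ∈ C) (hΦ : HasFDerivAt Φ A x) (hC : ∀ᶠ y in 𝓝 x, y ∈ C → Φ y = Φ x) (μ : G) :
    ContinuousLinearMap.adjoint A μ ∈ fNormal C x := by
  refine ⟨hx, fun ε hε => ?_⟩
  set ε' := ε / (‖μ‖ + 1)
  have hμε : ‖μ‖ * ε' ≤ ε := by
    rw [mul_div_assoc', div_le_iff₀ (by positivity)]
    nlinarith
  obtain ⟨δ, hδ, hball⟩ := Metric.eventually_nhds_iff_ball.1
    ((hΦ.isLittleO.def (by positivity : 0 < ε')).and hC)
  refine ⟨δ, hδ, fun y hy hyx => ?_⟩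
  obtain ⟨hlo, hΦy⟩ := hball y (by rwa [mem_ball, dist_eq_norm])
  rw [hΦy hy, sub_self, zero_sub, norm_neg] at hlo
  calc inner ℝ (ContinuousLinearMap.adjoint A μ) (y - x)
      = inner ℝ μ (A (y - x)) := ContinuousLinearMap.adjoint_inner_left _ _ _
    _ ≤ ‖μ‖ * ‖A (y - x)‖ := real_inner_le_norm _ _
    _ ≤ ‖μ‖ * (ε' * ‖y - x‖) := by gcongr
    _ ≤ ε * ‖y - x‖ := by rw [← mul_assoc]; gcongr

variable {D : Set (E × F)} {z v : E × F}

lemma add_mem_fNormal2 {w : E × F} (hv : v ∈ fNormal2 D z) (hw : w ∈ fNormal2 D z) :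
    v + w ∈ fNormal2 D z := by
  refine ⟨hv.1, fun ε hε => ?_⟩
  obtain ⟨δ₁, hδ₁, h₁⟩ := hv.2 (ε / 2) (by linarith)
  obtain ⟨δ₂, hδ₂, h₂⟩ := hw.2 (ε / 2) (by linarith)
  refine ⟨min δ₁ δ₂, lt_min hδ₁ hδ₂, fun z' hz' hlt => ?_⟩
  have e₁ := h₁ z' hz' (hlt.trans_le (min_le_left _ _))
  have e₂ := h₂ z' hz' (hlt.trans_le (min_le_right _ _))
  simp only [Prod.fst_add, Prod.snd_add, inner_add_left]
  linarith

lemma mem_fNormal2_of_mem_fNormal {C : Set E} {p : E} (hD : ∀ z' ∈ D, z'.1 ∈ C) (hz : z ∈ D)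
    (hp : p ∈ fNormal C z.1) : (p, (0 : F)) ∈ fNormal2 D z := by
  refine ⟨hz, fun ε hε => ?_⟩
  obtain ⟨δ, hδ, h⟩ := hp.2 ε hε
  refine ⟨δ, hδ, fun z' hz' hlt => ?_⟩
  have hfst : ‖z'.1 - z.1‖ ≤ ‖z' - z‖ := norm_fst_le (z' - z)
  simp only [inner_zero_left, add_zero]
  exact (h _ (hD _ hz') (hfst.trans_lt hlt)).trans (by gcongr)

lemma mem_lNormal2_iff : v ∈ lNormal2 D z ↔ z ∈ D ∧ (z, v) ∈ closure (gph (fNormal2 D)) := by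
  constructor
  · rintro ⟨hz, zk, vk, hN, hzk, hvk⟩
    exact ⟨hz, mem_closure_of_tendsto (hzk.prodMk_nhds hvk) (.of_forall hN)⟩
  · rintro ⟨hz, hcl⟩
    obtain ⟨p, hp, hlim⟩ := mem_closure_iff_seq_limit.1 hcl
    exact ⟨hz, fun k => (p k).1, fun k => (p k).2, hp, hlim.fst_nhds, hlim.snd_nhds⟩

lemma mem_lNormal2_of_tendsto {zk vk : ℕ → E × F} (hz : z ∈ D)
    (hmem : ∀ᶠ k in atTop, vk k ∈ lNormal2 D (zk k))
    (hzk : Tendsto zk atTop (𝓝 z)) (hvk : Tendsto vk atTop (𝓝 v)) : v ∈ lNormal2 D z :=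
  mem_lNormal2_iff.2 ⟨hz, isClosed_closure.mem_of_tendsto (hzk.prodMk_nhds hvk)
    (hmem.mono fun _ hk => (mem_lNormal2_iff.1 hk).2)⟩

lemma add_mem_lNormal2 {g : E × F → E × F} (hv : v ∈ lNormal2 D z) (hg : ContinuousAt g z)
    (hgD : ∀ᶠ z' in 𝓝 z, z' ∈ D → g z' ∈ fNormal2 D z') : v + g z ∈ lNormal2 D z := by
  obtain ⟨hz, hcl⟩ := mem_lNormal2_iff.1 hv
  have := mem_closure_iff_nhdsWithin_neBot.1 hcl
  refine mem_lNormal2_iff.2 ⟨hz, mem_closure_of_tendsto (f := fun p => (p.1, p.2 + g p.1))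
    (b := 𝓝[gph (fNormal2 D)] (z, v)) ?_ ?_⟩
  · exact (continuousAt_fst.prodMk (continuousAt_snd.add (hg.comp continuousAt_fst))).tendsto.mono_left
      nhdsWithin_le_nhds
  · filter_upwards [self_mem_nhdsWithin,
      nhdsWithin_le_nhds (continuousAt_fst.preimage_mem_nhds hgD)] with p hp hpg
    exact add_mem_fNormal2 hp (hpg hp.1)

end NormalCone

lemma self_mem_projSet [NormedAddCommGroup E] {C : Set E} {v : E} (hv : v ∈ C) :
    v ∈ projSet C v :=
  ⟨hv, by rw [sub_self, norm_zero, Metric.infDist_zero_of_mem hv]⟩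

section Projection
variable [NormedAddCommGroup E] [InnerProductSpace ℝ E]

lemma sub_mem_orthogonal_of_mem_projSet (K : Submodule ℝ E) {v p : E}
    (hp : p ∈ projSet (K : Set E) v) : v - p ∈ Kᗮ := by
  have hinf : ‖v - p‖ = ⨅ w : (K : Set E), ‖v - w‖ := by
    simp only [hp.2, Metric.infDist_eq_iInf, dist_eq_norm]
  rw [Submodule.mem_orthogonal']
  exact (Submodule.norm_eq_iInf_iff_real_inner_eq_zero K hp.1).1 hinf

variable {G : Type*} [NormedAddCommGroup G] [InnerProductSpace ℝ G]
  [FiniteDimensional ℝ E] [FiniteDimensional ℝ G]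

lemma orthogonal_ker_eq_range_adjoint (A : E →L[ℝ] G) :
    A.kerᗮ = (ContinuousLinearMap.adjoint A).range := by
  have := FiniteDimensional.complete ℝ E
  have := FiniteDimensional.complete ℝ G
  simpa [ContinuousLinearMap.adjoint_toLinearMap] using LinearMap.orthogonal_ker (A : E →ₗ[ℝ] G)

lemma surjective_iff_isUnit_comp_adjoint (A : E →L[ℝ] G) :
    Function.Surjective A ↔ IsUnit (A ∘L ContinuousLinearMap.adjoint A) := by
  have := FiniteDimensional.complete ℝ E
  have := FiniteDimensional.complete ℝ G
  rw [ContinuousLinearMap.isUnit_iff_isUnit_toLinearMap, LinearMap.isUnit_iff_range_eq_top,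
    ContinuousLinearMap.toLinearMap_comp, ← ContinuousLinearMap.adjoint_toLinearMap,
    LinearMap.range_self_comp_adjoint, LinearMap.range_eq_top]
  rfl

lemma isOpen_setOf_surjective : IsOpen {A : E →L[ℝ] G | Function.Surjective A} := by
  have := FiniteDimensional.complete ℝ E
  have := FiniteDimensional.complete ℝ G
  simp only [surjective_iff_isUnit_comp_adjoint]
  exact (Units.isOpen (R := G →L[ℝ] G)).preimage (continuous_id.clm_comp (ContinuousLinearMap.adjoint).continuous)

end Projection

section Chart
variable {G : Type*} [NormedAddCommGroup E] [NormedAddCommGroup G] {X O : Set E} {Φ : E → G}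

lemma eventually_mem_iff_of_chart (hO : IsOpen O) (hXO : X ∩ O = {x | x ∈ O ∧ Φ x = 0})
    {x : E} (hx : x ∈ X ∩ O) : ∀ᶠ y in 𝓝 x, y ∈ X ↔ Φ y = Φ x := by
  have hΦx : Φ x = 0 := (hXO ▸ hx).2
  filter_upwards [hO.mem_nhds hx.2] with y hy
  simpa [hy, hΦx] using Set.ext_iff.1 hXO y

variable [InnerProductSpace ℝ E] [FiniteDimensional ℝ E] [NormedAddCommGroup F]
  [InnerProductSpace ℝ F] [InnerProductSpace ℝ G] [FiniteDimensional ℝ G]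
  {S : E → Set F} {Φ' : E → E →L[ℝ] G}

lemma tanCone_eq_ker_of_chart (hO : IsOpen O) (hXO : X ∩ O = {x | x ∈ O ∧ Φ x = 0})
    (hd : ∀ x ∈ O, HasFDerivAt Φ (Φ' x) x) (hcd : ContinuousOn Φ' O) {x : E} (hx : x ∈ X ∩ O)
    (hsurj : Function.Surjective (Φ' x)) : tanCone X x = ((Φ' x).ker : Set E) :=
  tanCone_eq_ker
    (hasStrictFDerivAt_of_hasFDerivAt_of_continuousAt
      (Filter.eventually_of_mem (hO.mem_nhds hx.2) hd) (hcd.continuousAt (hO.mem_nhds hx.2)))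
    (LinearMap.range_eq_top.2 hsurj) (eventually_mem_iff_of_chart hO hXO hx)

lemma mem_projNormal_iff_of_chart (hO : IsOpen O) (hXO : X ∩ O = {x | x ∈ O ∧ Φ x = 0})
    (hd : ∀ x ∈ O, HasFDerivAt Φ (Φ' x) x) (hcd : ContinuousOn Φ' O) {z q : E × F}
    (hz : z ∈ gph (restr S X)) (hzO : z.1 ∈ O) (hsurj : Function.Surjective (Φ' z.1)) :
    q ∈ projNormal S X z ↔ q ∈ lNormal2 (gph (restr S X)) z ∧ Φ' z.1 q.1 = 0 := by
  have := FiniteDimensional.complete ℝ E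
  have := FiniteDimensional.complete ℝ G
  have htan := tanCone_eq_ker_of_chart hO hXO hd hcd ⟨hz.2, hzO⟩ hsurj
  constructor
  · rintro ⟨v, hv, hproj⟩
    rw [htan] at hproj
    obtain ⟨μ, hμ⟩ : v - q.1 ∈ (ContinuousLinearMap.adjoint (Φ' z.1)).range := by
      rw [← orthogonal_ker_eq_range_adjoint]
      exact sub_mem_orthogonal_of_mem_projSet _ hproj
    replace hμ : ContinuousLinearMap.adjoint (Φ' z.1) μ = v - q.1 := hμ
    have hnormal : ∀ᶠ z' in 𝓝 z, z' ∈ gph (restr S X) →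
        (ContinuousLinearMap.adjoint (Φ' z'.1) (-μ), (0 : F)) ∈ fNormal2 (gph (restr S X)) z' := by
      filter_upwards [continuousAt_fst.preimage_mem_nhds (hO.mem_nhds hzO)] with z' hz'O hz'
      exact mem_fNormal2_of_mem_fNormal (fun _ h => h.2) hz' (adjoint_apply_mem_fNormal hz'.2
        (hd _ hz'O) ((eventually_mem_iff_of_chart hO hXO ⟨hz'.2, hz'O⟩).mono fun _ h => h.1) _)
    have hcont : ContinuousAt
        (fun z' : E × F => (ContinuousLinearMap.adjoint (Φ' z'.1) (-μ), (0 : F))) z :=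
      ((ContinuousLinearMap.adjoint.continuous.continuousAt.comp
        ((hcd.continuousAt (hO.mem_nhds hzO)).comp continuousAt_fst)).clm_apply
          continuousAt_const).prodMk continuousAt_const
    refine ⟨?_, hproj.1⟩
    convert add_mem_lNormal2 hv hcont hnormal using 1
    ext <;> simp [hμ]
  · rintro ⟨hq, hker⟩
    exact ⟨q.1, hq, htan ▸ self_mem_projSet hker⟩

end Chart

def OuterSemicontinuousWithinAt {α β : Type*} [TopologicalSpace α] [TopologicalSpace β]
    (M : α → Set β) (A : Set α) (a : α) : Prop :=
  ∀ (zk : ℕ → α) (qk : ℕ → β) (q : β), (∀ k, zk k ∈ A) → (∀ k, qk k ∈ M (zk k)) →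
    Tendsto zk atTop (𝓝 a) → Tendsto qk atTop (𝓝 q) → q ∈ M a

section ProjectionalCoderivative
variable [NormedAddCommGroup E] [InnerProductSpace ℝ E] [NormedAddCommGroup F]
  [InnerProductSpace ℝ F] {S : E → Set F} {X : Set E}

lemma outerSemicontinuousWithinAt_projNormal {G : Type*} [FiniteDimensional ℝ E]
    [NormedAddCommGroup G] [InnerProductSpace ℝ G] [FiniteDimensional ℝ G] {O : Set E}
    {Φ : E → G} {Φ' : E → E →L[ℝ] G} {xb : E} {ub : F}
    (hO : IsOpen O) (hXO : X ∩ O = {x | x ∈ O ∧ Φ x = 0})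
    (hd : ∀ x ∈ O, HasFDerivAt Φ (Φ' x) x) (hcd : ContinuousOn Φ' O) (hxb : xb ∈ O)
    (hsurj : Function.Surjective (Φ' xb)) (hmem : (xb, ub) ∈ gph (restr S X)) :
    OuterSemicontinuousWithinAt (projNormal S X) (gph (restr S X)) (xb, ub) := by
  intro zk qk q hzk hqk hz hq
  have hΦ' : ContinuousAt Φ' xb := hcd.continuousAt (hO.mem_nhds hxb)
  have hreg : ∀ᶠ k in atTop,
      qk k ∈ lNormal2 (gph (restr S X)) (zk k) ∧ Φ' (zk k).1 (qk k).1 = 0 := by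
    have hU : ∀ᶠ x in 𝓝 xb, x ∈ O ∧ Function.Surjective (Φ' x) :=
      (hO.eventually_mem hxb).and (hΦ'.eventually (isOpen_setOf_surjective.mem_nhds hsurj))
    filter_upwards [hz.fst_nhds.eventually hU] with k hk
    exact (mem_projNormal_iff_of_chart hO hXO hd hcd (hzk k) hk.1 hk.2).1 (hqk k)
  have hlim : Tendsto (fun k => Φ' (zk k).1 (qk k).1) atTop (𝓝 (Φ' xb q.1)) :=
    ((continuous_fst.clm_apply continuous_snd).tendsto (Φ' xb, q.1)).comp
      ((hΦ'.tendsto.comp hz.fst_nhds).prodMk_nhds hq.fst_nhds)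
  rw [mem_projNormal_iff_of_chart hO hXO hd hcd hmem hxb hsurj]
  exact ⟨mem_lNormal2_of_tendsto hmem (hreg.mono fun _ h => h.1) hz hq,
    tendsto_nhds_unique hlim (tendsto_const_nhds.congr' (hreg.mono fun _ h => h.2.symm))⟩

lemma projCoderiv_eq_of_outerSemicontinuousWithinAt {x : E} {u : F}
    (h : OuterSemicontinuousWithinAt (projNormal S X) (gph (restr S X)) (x, u))
    (hmem : (x, u) ∈ gph (restr S X)) (u' : F) :
    projCoderiv S X x u u' = {t | (t, -u') ∈ projNormal S X (x, u)} := by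
  ext t
  constructor
  · rintro ⟨zk, qk, hzk, hqk, hz, hq⟩
    exact h zk qk _ hzk hqk hz hq
  · intro ht
    exact ⟨fun _ => (x, u), fun _ => (t, -u'), fun _ => hmem, fun _ => ht,
      tendsto_const_nhds, tendsto_const_nhds⟩

end ProjectionalCoderivative

theorem stmt13_general {n m : ℕ} (S : Euc n → Set (Euc m)) (X : Set (Euc n))
    (xb : Euc n) (ub : Euc m) (hX : SmoothManifoldAround X xb)
    (hmem : (xb, ub) ∈ gph (restr S X)) :
    (∀ (zk qk : ℕ → Euc n × Euc m) (q : Euc n × Euc m),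
      (∀ k, zk k ∈ gph (restr S X)) → (∀ k, qk k ∈ projNormal S X (zk k)) →
      Tendsto zk atTop (𝓝 (xb, ub)) → Tendsto qk atTop (𝓝 q) →
      q ∈ projNormal S X (xb, ub)) ∧
    (∀ us : Euc m, projCoderiv S X xb ub us =
      {t : Euc n | ∃ v ∈ coderiv (restr S X) xb ub us, t ∈ projSet (tanCone X xb) v}) := by
  obtain ⟨c, O, Φ, Φ', hO, hxbO, hXO, hd, hcd, hsurj⟩ := hX
  have hosc := outerSemicontinuousWithinAt_projNormal hO hXO hd hcd hxbO hsurj hmem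
  exact ⟨hosc, projCoderiv_eq_of_outerSemicontinuousWithinAt hosc hmem⟩

/-- For a smooth manifold `X ⊆ dom S`, the projected normal
cone mapping is outer semicontinuous relative to `gph S|_X` at `(xb,ub)`, and
consequently the projectional coderivative is attained at the reference point:
`D*_X S(xb|ub) = proj_{T_X(xb)} D*S|_X(xb|ub)`. -/
theorem stmt13 {n m : ℕ} (S : Euc n → Set (Euc m)) (X : Set (Euc n))
    (xb : Euc n) (ub : Euc m) (hX : SmoothManifoldAround X xb)
    (hdom : X ⊆ {x | (S x).Nonempty})
    (hmem : (xb, ub) ∈ gph (restr S X))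
    (hcl : LocallyClosedAt (gph S) (xb, ub)) :
    (∀ (zk qk : ℕ → Euc n × Euc m) (q : Euc n × Euc m),
      (∀ k, zk k ∈ gph (restr S X)) → (∀ k, qk k ∈ projNormal S X (zk k)) →
      Tendsto zk atTop (𝓝 (xb, ub)) → Tendsto qk atTop (𝓝 q) →
      q ∈ projNormal S X (xb, ub)) ∧
    (∀ us : Euc m, projCoderiv S X xb ub us =
      {t : Euc n | ∃ v ∈ coderiv (restr S X) xb ub us, t ∈ projSet (tanCone X xb) v}) :=
  stmt13_general S X xb ub hX hmem
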